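/- arXiv:1308.3810 — 4 statements merged into one kernel-verified Lean document; each statement's English description precedes it below -/
import Mathlib

section
/- Every (r,s)-formation on at least (r-1)^(2^(s-1))+1 distinct letters contains a binary (r,s)-formation. That is, if F is a concatenation of s permutations of a set of (r-1)^(2^(s-1))+1 distinct letters, then there exist r of those letters and a linear order p on them such that F has a subsequence which is a concatenation of s sequences, each being either p or the reverse of p. -/
/-- The increasing sequence `1 2 ... c`. -/
def Ic (c : ℕ) : List ℕ := List.range' 1 c

/-- The decreasing sequence `c (c-1) ... 1`. -/
def Dc (c : ℕ) : List ℕ := (Ic c).reverse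

/-- `k` concatenated copies of the list `l`. -/
def rep (l : List ℕ) (k : ℕ) : List ℕ := (List.replicate k l).flatten

/-- `up(c,t)`: the sequence `1 2 ... c` repeated `t` times. -/
def upSeq (c t : ℕ) : List ℕ := rep (Ic c) t

/-- `alt(c,k)`: the concatenation of `k` permutations alternating `I_c, D_c, I_c, ...`. -/
def altSeq (c k : ℕ) : List ℕ :=
  ((List.range k).map (fun i => if i % 2 = 0 then Ic c else Dc c)).flatten

/-- A sequence `s` contains `u` if some subsequence of `s` is obtained from `u`
by an injective renaming of its letters. -/
def Contains (s u : List ℕ) : Prop :=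
  ∃ f : ℕ → ℕ, Function.Injective f ∧ (u.map f).Sublist s

/-- `F` is an `(r,s)`-formation: a concatenation of `s` permutations of a set of
`r` distinct letters. -/
def IsFormation (r s : ℕ) (F : List ℕ) : Prop :=
  ∃ (A : Finset ℕ) (ps : List (List ℕ)), A.card = r ∧ ps.length = s ∧
    (∀ p ∈ ps, p.Nodup ∧ p.toFinset = A) ∧ F = ps.flatten

/-- `F` is a binary `(r,s)`-formation: an `(r,s)`-formation in which every
constituent permutation equals a fixed permutation `p` or its reverse. -/
def IsBinaryFormation (r s : ℕ) (F : List ℕ) : Prop :=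
  ∃ (A : Finset ℕ) (p : List ℕ) (ps : List (List ℕ)), A.card = r ∧
    p.Nodup ∧ p.toFinset = A ∧ ps.length = s ∧
    (∀ q ∈ ps, q = p ∨ q = p.reverse) ∧ F = ps.flatten

/-- The formation width of `u`: the minimum `s` such that there exists `r` for which
every `(r,s)`-formation contains `u`. -/
noncomputable def fw (u : List ℕ) : ℕ :=
  sInf {s | ∃ r, ∀ F, IsFormation r s F → Contains F u}

/-- The formation length of `u`: the minimum `r` such that every `(r, fw u)`-formation
contains `u`. -/
noncomputable def fl (u : List ℕ) : ℕ :=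
  sInf {r | ∀ F, IsFormation r (fw u) F → Contains F u}

/-- For a permutation `π` of `{1,...,c}`, the sequence `I_π = π(1) π(2) ... π(c)`. -/
def Iperm {c : ℕ} (π : Equiv.Perm (Fin c)) : List ℕ :=
  List.ofFn (fun i => (π i).val + 1)

/-- `l(u)` for a sequence `u` on letters `1,...,c`: the smallest `k` such that
`up(c,k)` contains `u`. -/
noncomputable def lval (c : ℕ) (u : List ℕ) : ℕ := sInf {k | Contains (upSeq c k) u}

/-- `r(u)` for a sequence `u` on letters `1,...,c`: the smallest `k` such that
`alt(c,k)` contains `u`. -/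
noncomputable def rval (c : ℕ) (u : List ℕ) : ℕ := sInf {k | Contains (altSeq c k) u}

/-- The binary formation `I_c^{e_1} D_c^{e_2} I_c^{e_3} ...` determined by the list
of exponents `e` (blocks alternate starting with `I_c`). -/
def altBlocks (c : ℕ) (e : List ℕ) : List ℕ :=
  ((e.zipIdx.map Prod.swap).map (fun p => rep (if p.1 % 2 = 0 then Ic c else Dc c) p.2)).flatten

/-!
Order the letters by their position in the first permutation `p`. By Erdős–Szekeres, any set
of more than `n²` letters contains `n + 1` letters on which a further permutation `q` reads
increasingly or decreasingly in that order, i.e. on which `q` agrees with `p` or with its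
reverse. Such agreement survives passing to subsets, so treating the remaining `s - 1`
permutations one after the other shrinks `(r - 1) ^ 2 ^ (s - 1) + 1` letters to `r` letters on
which every permutation is `p` or its reverse; restricting `F` to them gives the binary
formation.
-/

namespace List

section ErdosSzekeres

variable {α : Type*} [LinearOrder α]

/-- The length of a longest strictly increasing sublist of `l` starting at the first occurrence
of `x` (and `0` if `x ∉ l`). -/
def incLen : List α → α → ℕ
  | [], _ => 0
  | a :: t, x => if x = a then ({y ∈ t.toFinset | a < y}.sup t.incLen) + 1 else t.incLen x

theorem exists_cons_sublist_pairwise_lt_length_eq_incLen {l : List α} {x : α} (hx : x ∈ l) :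
    ∃ u, (x :: u).Sublist l ∧ (x :: u).Pairwise (· < ·) ∧ u.length + 1 = l.incLen x := by
  induction l generalizing x with
  | nil => simp at hx
  | cons a t ih =>
    by_cases hxa : x = a
    · subst hxa
      rw [incLen, if_pos rfl]
      rcases Finset.eq_empty_or_nonempty {y ∈ t.toFinset | x < y} with hempty | hne
      · exact ⟨[], (nil_sublist t).cons_cons x, pairwise_singleton _ _, by simp [hempty]⟩
      · obtain ⟨z, hz, hsup⟩ := Finset.exists_mem_eq_sup _ hne t.incLen
        rw [Finset.mem_filter, mem_toFinset] at hz
        obtain ⟨u, hsub, hsorted, hlen⟩ := ih hz.1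
        refine ⟨z :: u, hsub.cons_cons x, pairwise_cons.2 ⟨?_, hsorted⟩, by simp [hsup, hlen]⟩
        rintro y (_ | ⟨_, hy⟩)
        · exact hz.2
        · exact hz.2.trans (rel_of_pairwise_cons hsorted hy)
    · obtain ⟨u, hsub, hsorted, hlen⟩ := ih ((mem_cons.1 hx).resolve_left hxa)
      exact ⟨u, hsub.cons a, hsorted, by rw [incLen, if_neg hxa, hlen]⟩

theorem incLen_lt_incLen {l : List α} (hl : l.Nodup) {x y : α} (hxy : [x, y].Sublist l)
    (hlt : x < y) : l.incLen y < l.incLen x := by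
  induction l with
  | nil => simp at hxy
  | cons a t ih =>
    obtain ⟨hat, ht⟩ := nodup_cons.1 hl
    rcases sublist_cons_iff.1 hxy with hxy | ⟨_, ⟨rfl, rfl⟩, hy⟩
    · have hxa : x ≠ a := fun h => hat (h ▸ hxy.subset (mem_cons_self ..))
      have hya : y ≠ a := fun h => hat (h ▸ hxy.subset (mem_cons_of_mem _ (mem_singleton_self _)))
      simpa only [incLen, if_neg hxa, if_neg hya] using ih ht hxy
    · have hyt : y ∈ t := singleton_sublist.1 hy
      rw [incLen, incLen, if_neg hlt.ne', if_pos rfl, Nat.lt_succ_iff]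
      exact Finset.le_sup (Finset.mem_filter.2 ⟨mem_toFinset.2 hyt, hlt⟩)

/-- The Erdős–Szekeres theorem. -/
theorem exists_sublist_sortedLT_or_sortedGT {l : List α} (hl : l.Nodup) {a b : ℕ}
    (h : a * b < l.length) :
    ∃ t : List α, t.Sublist l ∧
      (t.length = a + 1 ∧ t.SortedLT ∨ t.length = b + 1 ∧ t.SortedGT) := by
  by_cases hlong : ∃ x ∈ l, a < l.incLen x
  · obtain ⟨x, hx, hax⟩ := hlong
    obtain ⟨u, hsub, hsorted, hlen⟩ := exists_cons_sublist_pairwise_lt_length_eq_incLen hx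
    refine ⟨(x :: u).take (a + 1), (take_sublist _ _).trans hsub, Or.inl ⟨?_, ?_⟩⟩
    · rw [length_take, length_cons]; omega
    · exact (hsorted.sublist (take_sublist _ _)).sortedLT
  push Not at hlong
  -- labels `incLen` lie in `[1, a]` and elements sharing a label form a decreasing sublist
  have hlabel : ∀ x ∈ l.toFinset, l.incLen x ∈ Finset.Icc 1 a := fun x hx => by
    obtain ⟨u, -, -, hlen⟩ := exists_cons_sublist_pairwise_lt_length_eq_incLen (mem_toFinset.1 hx)
    exact Finset.mem_Icc.2 ⟨by omega, hlong x (mem_toFinset.1 hx)⟩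
  obtain ⟨k, -, hk⟩ := Finset.exists_lt_card_fiber_of_mul_lt_card_of_maps_to hlabel
    (by rwa [Nat.card_Icc, Nat.add_sub_cancel, toFinset_card_of_nodup hl])
  set d := l.filter (l.incLen · = k)
  have hdlen : b < d.length := by
    have hfiber : d.toFinset = {x ∈ l.toFinset | l.incLen x = k} := by simp [d, toFinset_filter]
    rwa [← hfiber, toFinset_card_of_nodup (hl.filter _)] at hk
  have hdec : d.Pairwise (· > ·) := pairwise_iff_forall_sublist.2 fun {x y} hxy => by
    have hxyl := hxy.trans (filter_sublist (l := l))
    have hne : x ≠ y := by simpa using (hl.sublist hxyl)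
    have hxk := of_decide_eq_true (mem_filter.1 (hxy.subset (mem_cons_self ..))).2
    have hyk := of_decide_eq_true
      (mem_filter.1 (hxy.subset (mem_cons_of_mem _ (mem_singleton_self _)))).2
    exact lt_of_le_of_ne (not_lt.1 fun hlt => (incLen_lt_incLen hl hxyl hlt).ne (by
      rw [hxk, hyk])) hne.symm
  refine ⟨d.take (b + 1), (take_sublist _ _).trans filter_sublist, Or.inr ⟨?_, ?_⟩⟩
  · rw [length_take]; omega
  · exact (hdec.sublist (take_sublist _ _)).sortedGT

end ErdosSzekeres

section Restrict

variable {α : Type*} [DecidableEq α]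

def restrict (q : List α) (C : Finset α) : List α := q.filter (· ∈ C)

theorem restrict_sublist (q : List α) (C : Finset α) : (q.restrict C).Sublist q :=
  filter_sublist

theorem Nodup.restrict {q : List α} (hq : q.Nodup) (C : Finset α) : (q.restrict C).Nodup :=
  hq.filter _

theorem restrict_reverse (q : List α) (C : Finset α) :
    q.reverse.restrict C = (q.restrict C).reverse :=
  filter_reverse

theorem restrict_flatten (L : List (List α)) (C : Finset α) :
    L.flatten.restrict C = (L.map (·.restrict C)).flatten :=
  filter_flatten

theorem restrict_restrict {C D : Finset α} (q : List α) (h : D ⊆ C) :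
    (q.restrict C).restrict D = q.restrict D := by
  simp only [List.restrict, filter_filter]
  congr 1
  ext x
  simpa using fun hx => h hx

theorem toFinset_restrict {q : List α} {C : Finset α} (h : C ⊆ q.toFinset) :
    (q.restrict C).toFinset = C := by
  ext x
  simpa [List.restrict] using fun hx => mem_toFinset.1 (h hx)

theorem Sublist.restrict_toFinset_eq {t q : List α} (hq : q.Nodup) (htq : t.Sublist q) :
    q.restrict t.toFinset = t :=
  (hq.perm_iff_eq_of_sublist (restrict_sublist q _) htq).1 <|
    perm_of_nodup_nodup_toFinset_eq (hq.restrict _) (hq.sublist htq)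
      (toFinset_restrict fun _ hx => mem_toFinset.2 (htq.subset (mem_toFinset.1 hx)))

theorem Nodup.pairwise_idxOf_lt {p : List α} (hp : p.Nodup) :
    p.Pairwise fun a b => p.idxOf a < p.idxOf b :=
  pairwise_iff_getElem.2 fun i j hi hj hij => by
    rwa [hp.idxOf_getElem i hi, hp.idxOf_getElem j hj]

theorem sublist_of_pairwise_idxOf_lt {p t : List α} (hp : p.Nodup)
    (htp : t.toFinset ⊆ p.toFinset) (ht : t.Pairwise fun a b => p.idxOf a < p.idxOf b) :
    t.Sublist p := by
  have ht_nodup : t.Nodup :=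
    nodup_iff_pairwise_ne.2 (ht.imp fun h hab => h.ne (congrArg p.idxOf hab))
  have hperm : (p.restrict t.toFinset).Perm t :=
    perm_of_nodup_nodup_toFinset_eq (hp.restrict _) ht_nodup (toFinset_restrict htp)
  refine hperm.eq_of_pairwise (fun _ _ _ _ hab hba => absurd (hab.trans hba) (lt_irrefl _))
    (hp.pairwise_idxOf_lt.sublist (restrict_sublist p _)) ht ▸ restrict_sublist p _

def SameOrReversedOn (p q : List α) (C : Finset α) : Prop :=
  q.restrict C = p.restrict C ∨ q.restrict C = (p.restrict C).reverse

theorem SameOrReversedOn.mono {p q : List α} {C D : Finset α} (h : SameOrReversedOn p q C)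
    (hDC : D ⊆ C) : SameOrReversedOn p q D := by
  unfold SameOrReversedOn
  rw [← restrict_restrict q hDC, ← restrict_restrict p hDC, ← restrict_reverse]
  rcases h with h | h <;> rw [h] <;> simp

theorem exists_sameOrReversedOn {p q : List α} (hp : p.Nodup) (hq : q.Nodup) {B : Finset α}
    (hBp : B ⊆ p.toFinset) (hBq : B ⊆ q.toFinset) {n : ℕ} (hB : n * n < B.card) :
    ∃ C ⊆ B, C.card = n + 1 ∧ SameOrReversedOn p q C := by
  -- read `q` on `B` with each letter replaced by its position in `p`
  set key := fun x => p.idxOf x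
  set l := q.restrict B
  have hlB : l.toFinset = B := toFinset_restrict hBq
  have hl : l.Nodup := hq.restrict B
  have hkey : (l.map key).Nodup := hl.map_on fun x hx y _ hxy =>
    (idxOf_inj (mem_toFinset.1 (hBp (hlB ▸ mem_toFinset.2 hx)))).1 hxy
  obtain ⟨_, hsub, hsorted⟩ := exists_sublist_sortedLT_or_sortedGT hkey (a := n) (b := n)
    (by rwa [length_map, ← toFinset_card_of_nodup hl, hlB])
  obtain ⟨t, htl, rfl⟩ := sublist_map_iff.1 hsub
  have htB : t.toFinset ⊆ B := hlB ▸ fun _ hx => mem_toFinset.2 (htl.subset (mem_toFinset.1 hx))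
  have htp : t.toFinset ⊆ p.toFinset := htB.trans hBp
  refine ⟨t.toFinset, htB, ?_, ?_⟩
  · rw [toFinset_card_of_nodup (hl.sublist htl)]
    rcases hsorted with ⟨hlen, -⟩ | ⟨hlen, -⟩ <;> simpa using hlen
  unfold SameOrReversedOn
  rw [(htl.trans (restrict_sublist q B)).restrict_toFinset_eq hq]
  rcases hsorted with ⟨-, hinc⟩ | ⟨-, hdec⟩
  · left
    exact ((sublist_of_pairwise_idxOf_lt hp htp
      (pairwise_map.1 hinc.pairwise)).restrict_toFinset_eq hp).symm
  · right
    have hrev : t.reverse.Sublist p := sublist_of_pairwise_idxOf_lt hp (by rwa [toFinset_reverse])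
      (pairwise_reverse.2 (pairwise_map.1 hdec.pairwise))
    rw [← toFinset_reverse, hrev.restrict_toFinset_eq hp, reverse_reverse]

theorem exists_forall_sameOrReversedOn {p : List α} (hp : p.Nodup) {m : ℕ} :
    ∀ (qs : List (List α)) {B : Finset α}, B ⊆ p.toFinset → (∀ q ∈ qs, q.Nodup ∧ B ⊆ q.toFinset) →
      m ^ 2 ^ qs.length < B.card → ∃ C ⊆ B, C.card = m + 1 ∧ ∀ q ∈ qs, SameOrReversedOn p q C
  | [], B, _, _, hB => by
    obtain ⟨C, hCB, hC⟩ := Finset.exists_subset_card_eq (show m + 1 ≤ B.card by simpa using hB)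
    exact ⟨C, hCB, hC, by simp⟩
  | q :: qs, B, hBp, hqs, hB => by
    have hsq : m ^ 2 ^ qs.length * m ^ 2 ^ qs.length < B.card := by
      rwa [length_cons, pow_succ, pow_mul, sq] at hB
    obtain ⟨C₁, hC₁B, hC₁, hq⟩ :=
      exists_sameOrReversedOn hp (hqs q mem_cons_self).1 hBp (hqs q mem_cons_self).2 hsq
    obtain ⟨C, hCC₁, hC, hC'⟩ := exists_forall_sameOrReversedOn hp (m := m) qs (hC₁B.trans hBp)
      (fun q' hq' => ⟨(hqs q' (mem_cons_of_mem q hq')).1,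
        hC₁B.trans (hqs q' (mem_cons_of_mem q hq')).2⟩) (by omega)
    refine ⟨C, hCC₁.trans hC₁B, hC, ?_⟩
    rintro q' (_ | ⟨_, hq'⟩)
    · exact hq.mono hCC₁
    · exact hC' q' hq'

end Restrict

end List

theorem isBinaryFormation_restrict_flatten {p : List ℕ} (hp : p.Nodup) {C : Finset ℕ}
    (hC : C ⊆ p.toFinset) {ps : List (List ℕ)} (h : ∀ q ∈ ps, p.SameOrReversedOn q C) :
    IsBinaryFormation C.card ps.length (ps.flatten.restrict C) :=
  ⟨C, p.restrict C, ps.map (·.restrict C), rfl, hp.restrict C, List.toFinset_restrict hC,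
    List.length_map _, by simpa [List.SameOrReversedOn] using h, List.restrict_flatten ps C⟩

theorem stmt0 (r s : ℕ) (F : List ℕ)
    (hF : IsFormation ((r - 1) ^ (2 ^ (s - 1)) + 1) s F) :
    ∃ G, IsBinaryFormation r s G ∧ G.Sublist F := by
  obtain ⟨A, ps, hA, rfl, hps, rfl⟩ := hF
  -- the first permutation is the reference order; when `s = 0` any ordering of `A` will do
  set p := ps.headD A.toList
  have hp : p.Nodup ∧ p.toFinset = A := by
    cases ps with
    | nil => exact ⟨A.nodup_toList, A.toList_toFinset⟩
    | cons p₀ _ => exact hps p₀ List.mem_cons_self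
  obtain ⟨C, hCA, hC, hCps⟩ := List.exists_forall_sameOrReversedOn hp.1 (m := r - 1) ps.tail
    hp.2.ge (fun q hq => ⟨(hps q (List.mem_of_mem_tail hq)).1,
      (hps q (List.mem_of_mem_tail hq)).2.ge⟩)
    (by rw [List.length_tail, hA]; omega)
  obtain ⟨D, hDC, rfl⟩ := Finset.exists_subset_card_eq (show r ≤ C.card by omega)
  have hD : ∀ q ∈ ps, p.SameOrReversedOn q D := by
    cases ps with
    | nil => simp
    | cons p₀ qs =>
      rintro q (_ | ⟨_, hq⟩)
      · exact Or.inl rfl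
      · exact (hCps q hq).mono hDC
  exact ⟨_, isBinaryFormation_restrict_flatten hp.1 (hDC.trans (hCA.trans hp.2.ge)) hD,
    List.restrict_sublist _ _⟩
end

section
/- If u is a sequence with r distinct letters, then fl(u) ≤ (r-1)^(2^(fw(u)-1)) + 1, where fl(u) is the formation length of u. -/
/-!
Let `s = fw u` and let `F` be an `(N, s)`-formation with `N = (r - 1) ^ 2 ^ (s - 1) + 1`.
Erdős–Szekeres applied to the first block of `F` and one further block gives a common or
reversed subsequence of length `(r - 1) ^ 2 ^ (s - 2) + 1`; iterating over the remaining
`s - 1` blocks leaves `r` letters `t` on which every block of `F` restricts to `t` or to its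
reverse. So `F` restricted to `t` is a binary formation on `r` letters. By definition of
`fw`, the binary formation with the same pattern of orientations on some large number `r₀`
of letters contains `u`; since `u` uses only `r` letters, that occurrence can be relabelled
into the one on `t`.
-/

namespace ErdosSzekeres

open Finset

variable {α : Type*} [LinearOrder α] {n : ℕ}

open Classical in
noncomputable def incChainsEndingAt (f : Fin n → α) (i : Fin n) : Finset (Finset (Fin n)) :=
  univ.filter fun s : Finset (Fin n) => i ∈ s ∧ (∀ j ∈ s, j ≤ i) ∧ StrictMonoOn f ↑s

noncomputable def longestIncEndingAt (f : Fin n → α) (i : Fin n) : ℕ :=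
  (incChainsEndingAt f i).sup card

variable (f : Fin n → α) {i : Fin n}

lemma mem_incChainsEndingAt {s : Finset (Fin n)} :
    s ∈ incChainsEndingAt f i ↔ i ∈ s ∧ (∀ j ∈ s, j ≤ i) ∧ StrictMonoOn f ↑s := by
  simp [incChainsEndingAt]

lemma card_le_longestIncEndingAt {s : Finset (Fin n)} (hi : i ∈ s) (hs : ∀ j ∈ s, j ≤ i)
    (hf : StrictMonoOn f s) : #s ≤ longestIncEndingAt f i :=
  le_sup ((mem_incChainsEndingAt f).2 ⟨hi, hs, hf⟩)

lemma exists_card_eq_longestIncEndingAt (i : Fin n) :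
    ∃ s : Finset (Fin n), i ∈ s ∧ (∀ j ∈ s, j ≤ i) ∧ StrictMonoOn f s ∧
      #s = longestIncEndingAt f i := by
  obtain ⟨s, hs, hcard⟩ := exists_mem_eq_sup (incChainsEndingAt f i)
    ⟨{i}, (mem_incChainsEndingAt f).2 ⟨Finset.mem_singleton_self i, by simp, by simp⟩⟩ card
  obtain ⟨hi, hsi, hmono⟩ := (mem_incChainsEndingAt f).1 hs
  exact ⟨s, hi, hsi, hmono, hcard.symm⟩

lemma one_le_longestIncEndingAt (i : Fin n) : 1 ≤ longestIncEndingAt f i := by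
  simpa using card_le_longestIncEndingAt f (Finset.mem_singleton_self i) (by simp) (by simp)

lemma longestIncEndingAt_lt {j : Fin n} (hij : i < j) (hf : f i < f j) :
    longestIncEndingAt f i < longestIncEndingAt f j := by
  classical
  obtain ⟨s, his, hsi, hmono, hcard⟩ := exists_card_eq_longestIncEndingAt f i
  have hjs : j ∉ s := fun hj => (hsi j hj).not_gt hij
  have hmono' : StrictMonoOn f ↑(insert j s) := by
    have hlt : ∀ k ∈ s, f k < f j := fun k hk =>
      (hsi k hk).lt_or_eq.elim (fun hki => (hmono hk his hki).trans hf) (· ▸ hf)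
    intro x hx y hy hxy
    simp only [coe_insert, Set.mem_insert_iff, mem_coe] at hx hy
    rcases hx with rfl | hx <;> rcases hy with rfl | hy
    · exact hxy.false.elim
    · exact ((hsi y hy).trans_lt hij |>.trans hxy |>.false).elim
    · exact hlt x hx
    · exact hmono hx hy hxy
  calc longestIncEndingAt f i < #(insert j s) := by rw [card_insert_of_notMem hjs, hcard]; omega
    _ ≤ longestIncEndingAt f j :=
      card_le_longestIncEndingAt f (mem_insert_self j s)
        (by simpa using fun k hk => (hsi k hk).trans hij.le) hmono'

lemma exists_strictMonoOn_card_eq_of_lt {c : ℕ} (hc : c < longestIncEndingAt f i) :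
    ∃ s : Finset (Fin n), #s = c + 1 ∧ StrictMonoOn f s := by
  obtain ⟨s, -, -, hmono, hcard⟩ := exists_card_eq_longestIncEndingAt f i
  obtain ⟨t, hts, htcard⟩ := exists_subset_card_eq (s := s) (n := c + 1) (by omega)
  exact ⟨t, htcard, hmono.mono (coe_subset.2 hts)⟩

lemma injective_longestIncEndingAt_pair (hf : Function.Injective f) :
    Function.Injective fun i =>
      (longestIncEndingAt f i, longestIncEndingAt (OrderDual.toDual ∘ f) i) := by
  refine Function.Injective.of_lt_imp_ne fun i j hij heq => ?_
  simp only [Prod.mk.injEq] at heq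
  rcases (hf.ne hij.ne).lt_or_gt with hlt | hgt
  · exact (longestIncEndingAt_lt f hij hlt).ne heq.1
  · exact (longestIncEndingAt_lt (OrderDual.toDual ∘ f) hij hgt).ne heq.2

theorem exists_strictMonoOn_or_strictAntiOn {a b : ℕ} (hf : Function.Injective f)
    (hn : a * b < n) :
    (∃ s : Finset (Fin n), #s = a + 1 ∧ StrictMonoOn f s) ∨
      ∃ s : Finset (Fin n), #s = b + 1 ∧ StrictAntiOn f s := by
  obtain ⟨i, hi⟩ : ∃ i, a < longestIncEndingAt f i ∨
      b < longestIncEndingAt (OrderDual.toDual ∘ f) i := by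
    by_contra! h
    have := card_le_card_of_injOn (s := univ) (t := Icc 1 a ×ˢ Icc 1 b) _
      (fun i _ => by simp [one_le_longestIncEndingAt, (h i).1, (h i).2])
      (injective_longestIncEndingAt_pair f hf).injOn
    simp only [card_univ, Fintype.card_fin, card_product, Nat.card_Icc,
      add_tsub_cancel_right] at this
    omega
  refine hi.imp (exists_strictMonoOn_card_eq_of_lt f) fun hi => ?_
  obtain ⟨s, hs, hmono⟩ := exists_strictMonoOn_card_eq_of_lt _ hi
  exact ⟨s, hs, strictMonoOn_toDual_comp_iff.1 hmono⟩

end ErdosSzekeres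

namespace List

variable {α : Type*}

open Finset in
lemma exists_sublist_pairwise_of_finset {R : α → α → Prop} (l : List α)
    (s : Finset (Fin l.length)) (hs : ∀ i ∈ s, ∀ j ∈ s, i < j → R l[i] l[j]) :
    ∃ t, t <+ l ∧ t.length = #s ∧ t.Pairwise R := by
  refine ⟨(s.sort (· ≤ ·)).map (fun i => l[i]), map_getElem_sublist s.sortedLT_sort.pairwise,
    by simp, ?_⟩
  rw [pairwise_map]
  exact s.sortedLT_sort.pairwise.imp_of_mem fun hi hj hij =>
    hs _ ((mem_sort _).1 hi) _ ((mem_sort _).1 hj) hij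

theorem exists_sublist_pairwise_lt_or_gt [LinearOrder α] {l : List α} (hl : l.Nodup) {a b : ℕ}
    (h : a * b < l.length) :
    (∃ t, t <+ l ∧ t.length = a + 1 ∧ t.Pairwise (· < ·)) ∨
      ∃ t, t <+ l ∧ t.length = b + 1 ∧ t.Pairwise (· > ·) := by
  rcases ErdosSzekeres.exists_strictMonoOn_or_strictAntiOn (fun i : Fin l.length => l[i])
    (nodup_iff_injective_get.1 hl) h with ⟨s, hs, hmono⟩ | ⟨s, hs, hanti⟩
  · obtain ⟨t, ht, hlen, hpw⟩ :=
      exists_sublist_pairwise_of_finset l s fun i hi j hj hij => hmono hi hj hij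
    exact .inl ⟨t, ht, hlen.trans hs, hpw⟩
  · obtain ⟨t, ht, hlen, hpw⟩ :=
      exists_sublist_pairwise_of_finset (R := (· > ·)) l s fun i hi j hj hij => hanti hi hj hij
    exact .inr ⟨t, ht, hlen.trans hs, hpw⟩

theorem sublist_of_pairwise_idxOf_lt_s6 [DecidableEq α] {t q : List α} (hq : q.Nodup)
    (htq : t ⊆ q) (ht : t.Pairwise fun x y => q.idxOf x < q.idxOf y) : t <+ q := by
  have : Std.Antisymm fun x y : α => q.idxOf x < q.idxOf y :=
    ⟨fun _ _ h h' => (h.asymm h').elim⟩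
  have : Std.Irrefl fun x y : α => q.idxOf x < q.idxOf y := ⟨fun _ => lt_irrefl _⟩
  refine sublist_of_subperm_of_pairwise (subperm_of_subset ht.nodup htq) ht ?_
  rw [pairwise_iff_getElem]
  intro i j hi hj hij
  rwa [hq.idxOf_getElem, hq.idxOf_getElem]

theorem exists_sublist_sublist_or_reverse_sublist [DecidableEq α] {p q : List α} (hp : p.Nodup)
    (hq : q.Nodup) (hpq : p ⊆ q) {a : ℕ} (h : a ^ 2 < p.length) :
    ∃ t, t <+ p ∧ t.length = a + 1 ∧ (t <+ q ∨ t.reverse <+ q) := by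
  have hnodup : (p.map q.idxOf).Nodup :=
    hp.map_on fun x hx y _ hxy => (idxOf_inj (hpq hx)).1 hxy
  rcases exists_sublist_pairwise_lt_or_gt hnodup (a := a) (b := a) (by simpa [sq] using h) with
    ⟨t', ht', hlen, hpw⟩ | ⟨t', ht', hlen, hpw⟩ <;>
  obtain ⟨t, ht, rfl⟩ := sublist_map_iff.1 ht' <;>
  rw [length_map] at hlen <;>
  rw [pairwise_map] at hpw <;>
  refine ⟨t, ht, hlen, ?_⟩
  · exact .inl (sublist_of_pairwise_idxOf_lt_s6 hq (Subset.trans ht.subset hpq) hpw)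
  · exact .inr (sublist_of_pairwise_idxOf_lt_s6 hq (fun x hx => hpq (ht.subset (mem_reverse.1 hx)))
      (pairwise_reverse.2 hpw))

theorem exists_sublist_forall_sublist_or_reverse_sublist [DecidableEq α] (m : ℕ) :
    ∀ (qs : List (List α)) {p : List α}, p.Nodup → (∀ q ∈ qs, q.Nodup ∧ p ⊆ q) →
      (m - 1) ^ 2 ^ qs.length < p.length →
      ∃ t, t <+ p ∧ t.length = m ∧ ∀ q ∈ qs, t <+ q ∨ t.reverse <+ q
  | [], p, _, _, h => ⟨p.take m, take_sublist _ _, by simp at h; simp; omega, by simp⟩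
  | q :: qs, p, hp, hqs, h => by
    obtain ⟨hq, hpq⟩ := hqs q mem_cons_self
    obtain ⟨t₁, ht₁p, ht₁len, ht₁q⟩ := exists_sublist_sublist_or_reverse_sublist hp hq hpq
      (a := (m - 1) ^ 2 ^ qs.length) (by rw [← pow_mul, ← pow_succ]; simpa using h)
    obtain ⟨t, htt₁, htlen, ht⟩ := exists_sublist_forall_sublist_or_reverse_sublist m qs
      (ht₁p.nodup hp) (fun q' hq' => ⟨(hqs q' (mem_cons_of_mem _ hq')).1,
        Subset.trans ht₁p.subset (hqs q' (mem_cons_of_mem _ hq')).2⟩) (by omega)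
    refine ⟨t, htt₁.trans ht₁p, htlen, ?_⟩
    rintro q' (_ | ⟨_, hq'⟩)
    · exact ht₁q.imp htt₁.trans htt₁.reverse.trans
    · exact ht q' hq'

theorem exists_injective_map_eq [DecidableEq α] {w t : List α} (hw : w.Nodup)
    (ht : t.Nodup) (hlen : w.length = t.length) :
    ∃ g : α → α, Function.Injective g ∧ w.map g = t := by
  let e : {x // x ∈ w} ≃ {x // x ∈ t} :=
    (Nodup.getEquiv w hw).symm.trans ((finCongr hlen).trans (Nodup.getEquiv t ht))
  have : Finite {x | x ∈ w} := w.finite_toSet.to_subtype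
  refine ⟨Equiv.extendSubtype e, (Equiv.extendSubtype e).injective, ext_getElem (by simpa) ?_⟩
  intro i hi _
  simp [Equiv.extendSubtype_apply_of_mem, e, hw.idxOf_getElem]

theorem filter_mem_eq_of_sublist [DecidableEq α] {t q : List α} (hq : q.Nodup)
    (htq : t <+ q) : q.filter (· ∈ t) = t := by
  refine (Sublist.eq_of_length_le ?_ ?_).symm
  · have := htq.filter (· ∈ t)
    rwa [filter_eq_self.2 fun x hx => decide_eq_true hx] at this
  · exact (hq.filter _).length_le_of_subset fun x hx => by simpa using (mem_filter.1 hx).2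

theorem sublist_flatten_of_forall_mem :
    ∀ {v : List α} {ps : List (List α)}, v.length ≤ ps.length →
      (∀ x ∈ v, ∀ q ∈ ps, x ∈ q) → v <+ ps.flatten
  | [], _, _, _ => nil_sublist _
  | _ :: _, [], hlen, _ => by simp at hlen
  | x :: v, q :: ps, hlen, hmem => by
    simpa using (singleton_sublist.2 (hmem x mem_cons_self q mem_cons_self)).append
      (sublist_flatten_of_forall_mem (Nat.le_of_succ_le_succ hlen) fun y hy q' hq' =>
        hmem y (mem_cons_of_mem _ hy) q' (mem_cons_of_mem _ hq'))

end List

open List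

theorem Contains.trans_sublist {F G u : List ℕ} (h : Contains F u) (hFG : F <+ G) :
    Contains G u :=
  let ⟨f, hf, hsub⟩ := h
  ⟨f, hf, hsub.trans hFG⟩

theorem exists_forall_isFormation_contains (u : List ℕ) :
    ∃ s r, ∀ F, IsFormation r s F → Contains F u := by
  classical
  refine ⟨u.length, u.toFinset.card, ?_⟩
  rintro F ⟨A, ps, hA, hps, hblocks, rfl⟩
  obtain ⟨g, hg, hgA⟩ := exists_injective_map_eq (nodup_dedup u) A.nodup_toList
    (by rw [Finset.length_toList, hA, card_toFinset])
  refine ⟨g, hg, sublist_flatten_of_forall_mem (by simp [hps]) ?_⟩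
  rintro _ hy q hq
  obtain ⟨x, hx, rfl⟩ := mem_map.1 hy
  have hgx : g x ∈ A.toList := hgA ▸ mem_map_of_mem (mem_dedup.2 hx)
  rw [← mem_toFinset, (hblocks q hq).2]
  exact Finset.mem_toList.1 hgx

def binaryFormation (p : List ℕ) (bs : List Bool) : List ℕ :=
  (bs.map fun b => bif b then p else p.reverse).flatten

section binaryFormation

variable {p : List ℕ} {bs : List Bool}

theorem isFormation_binaryFormation (hp : p.Nodup) :
    IsFormation p.length bs.length (binaryFormation p bs) := by
  classical
  refine ⟨p.toFinset, _, toFinset_card_of_nodup hp, length_map _, ?_, rfl⟩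
  intro q hq
  obtain ⟨b, -, rfl⟩ := mem_map.1 hq
  cases b <;> simp [hp]

theorem binaryFormation_subset : binaryFormation p bs ⊆ p := by
  intro x hx
  obtain ⟨_, hq, hx⟩ := mem_flatten.1 hx
  obtain ⟨b, -, rfl⟩ := mem_map.1 hq
  cases b <;> simpa using hx

theorem map_binaryFormation (g : ℕ → ℕ) :
    (binaryFormation p bs).map g = binaryFormation (p.map g) bs := by
  simp only [binaryFormation, map_flatten, List.map_map]
  congr 2; ext1 b; cases b <;> simp

theorem filter_binaryFormation (P : ℕ → Bool) :
    (binaryFormation p bs).filter P = binaryFormation (p.filter P) bs := by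
  simp only [binaryFormation, filter_flatten, List.map_map]
  congr 2; ext1 b; cases b <;> simp [filter_reverse]

theorem Contains.binaryFormation_of_length_eq {t u : List ℕ}
    (hu : Contains (binaryFormation p bs) u) (hp : p.Nodup) (ht : t.Nodup)
    (hlen : t.length = u.toFinset.card) : Contains (binaryFormation t bs) u := by
  classical
  obtain ⟨f, hf, hsub⟩ := hu
  set L := u.toFinset.image f
  have hLp : ∀ x ∈ L, x ∈ p := by
    intro x hx
    obtain ⟨y, hy, rfl⟩ := Finset.mem_image.1 hx
    exact binaryFormation_subset (hsub.subset (mem_map_of_mem (mem_toFinset.1 hy)))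
  have hwlen : (p.filter (· ∈ L)).length = t.length := by
    rw [← toFinset_card_of_nodup (hp.filter _), hlen,
      ← Finset.card_image_of_injective u.toFinset hf]
    congr 1; ext x
    rw [mem_toFinset, mem_filter, decide_eq_true_eq]
    exact ⟨And.right, fun hx => ⟨hLp x hx, hx⟩⟩
  obtain ⟨g, hg, hwg⟩ := exists_injective_map_eq (hp.filter _) ht hwlen
  have hfL : u.map f <+ binaryFormation (p.filter (· ∈ L)) bs := by
    rw [← filter_binaryFormation]
    have := hsub.filter (· ∈ L)
    rwa [filter_eq_self.2 fun x hx => by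
      obtain ⟨y, hy, rfl⟩ := mem_map.1 hx
      exact decide_eq_true (Finset.mem_image_of_mem f (mem_toFinset.2 hy))] at this
  refine ⟨g ∘ f, hg.comp hf, ?_⟩
  simpa [← map_map, ← hwg, map_binaryFormation] using hfL.map g

theorem exists_filter_flatten_eq_binaryFormation {t : List ℕ} {ps : List (List ℕ)}
    (hps : ∀ q ∈ ps, q.Nodup ∧ (t <+ q ∨ t.reverse <+ q)) :
    ∃ bs : List Bool, bs.length = ps.length ∧
      ps.flatten.filter (· ∈ t) = binaryFormation t bs := by
  refine ⟨ps.map fun q => decide (t <+ q), length_map _, ?_⟩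
  simp only [binaryFormation, filter_flatten, List.map_map]
  congr 1
  refine map_congr_left fun q hq => ?_
  obtain ⟨hq, htq⟩ := hps q hq
  by_cases h : t <+ q
  · simp [h, filter_mem_eq_of_sublist hq h]
  · simpa [h, mem_reverse] using filter_mem_eq_of_sublist hq (htq.resolve_left h)

end binaryFormation

theorem exists_forall_sublist_or_reverse_sublist_of_blocks {A : Finset ℕ}
    {ps : List (List ℕ)} {m : ℕ} (hblocks : ∀ q ∈ ps, q.Nodup ∧ q.toFinset = A)
    (hA : (m - 1) ^ 2 ^ (ps.length - 1) < A.card) :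
    ∃ t : List ℕ, t.Nodup ∧ t.length = m ∧
      ∀ q ∈ ps, q.Nodup ∧ (t <+ q ∨ t.reverse <+ q) := by
  rcases ps with _ | ⟨p, qs⟩
  · exact ⟨range m, nodup_range, length_range, by simp⟩
  obtain ⟨hp, hpA⟩ := hblocks p mem_cons_self
  obtain ⟨t, htp, htlen, ht⟩ := exists_sublist_forall_sublist_or_reverse_sublist m qs hp
    (fun q hq => ⟨(hblocks q (mem_cons_of_mem _ hq)).1, fun x hx => by
      rw [← mem_toFinset, (hblocks q (mem_cons_of_mem _ hq)).2, ← hpA, mem_toFinset]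
      exact hx⟩)
    (by simpa [← toFinset_card_of_nodup hp, hpA] using hA)
  refine ⟨t, htp.nodup hp, htlen, fun q hq => ⟨(hblocks q hq).1, ?_⟩⟩
  rcases hq with _ | ⟨_, hq⟩
  · exact .inl htp
  · exact ht q hq

theorem stmt6 (u : List ℕ) (r : ℕ) (h : u.toFinset.card = r) :
    fl u ≤ (r - 1) ^ (2 ^ (fw u - 1)) + 1 := by
  classical
  obtain ⟨r₀, hr₀⟩ : ∃ r₀, ∀ F, IsFormation r₀ (fw u) F → Contains F u :=
    Nat.sInf_mem (exists_forall_isFormation_contains u)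
  refine Nat.sInf_le fun F ⟨A, ps, hA, hps, hblocks, hF⟩ => ?_
  obtain ⟨t, ht, htlen, htps⟩ := exists_forall_sublist_or_reverse_sublist_of_blocks (m := r)
    hblocks (by rw [hA, hps]; omega)
  obtain ⟨bs, hbs, hfilter⟩ := exists_filter_flatten_eq_binaryFormation htps
  have hcont : Contains (binaryFormation (range r₀) bs) u := by
    have := isFormation_binaryFormation (bs := bs) (nodup_range (n := r₀))
    rw [length_range, hbs, hps] at this
    exact hr₀ _ this
  refine (hcont.binaryFormation_of_length_eq nodup_range ht (htlen.trans h.symm)).trans_sublist ?_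
  rw [hF, ← hfilter]
  exact filter_sublist
end

section
/- For every c ≥ 1, l(I_c D_c) = c + 1; that is, the minimum k such that up(c,k) = I_c^k contains I_c D_c as a subsequence under some injective renaming of letters (equivalently, the minimum over permutations π of the least k with I_π D_π a subsequence of I_c^k) equals c + 1. -/
/-!
Count the non-ascents (adjacent pairs `x y` with `y ≤ x`) of a word. A subword of `k` copies of
the increasing word `1 2 ... c` has at most `k - 1` of them, one per boundary between copies.
For a renaming `b` of `I_c` the word `b ++ b.reverse` has exactly `c`: each adjacent pair of
`b` is a non-ascent either in `b` or in `b.reverse`, which gives `c - 1`, and the repeated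
middle letter gives one more. Hence `k ≥ c + 1`, and `I_c (I_c)^c` visibly contains `I_c D_c`.
-/

section NonAscents

variable {α : Type*} [LinearOrder α]

def nonAscents : List α → ℕ
  | [] => 0
  | [_] => 0
  | a :: b :: t => (if b ≤ a then 1 else 0) + nonAscents (b :: t)

theorem nonAscents_cons_cons (a b : α) (t : List α) :
    nonAscents (a :: b :: t) = (if b ≤ a then 1 else 0) + nonAscents (b :: t) := rfl

theorem nonAscents_pair (a b : α) : nonAscents [a, b] = if b ≤ a then 1 else 0 := rfl

theorem nonAscents_append_le :
    ∀ x y : List α, nonAscents (x ++ y) ≤ nonAscents x + nonAscents y + 1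
  | [], y => by simp [nonAscents]
  | [a], [] => by simp [nonAscents]
  | [a], b :: t => by
      rw [List.singleton_append, nonAscents_cons_cons]
      split <;> simp [nonAscents, Nat.add_comm]
  | a :: b :: t, y => by
      have ih := nonAscents_append_le (b :: t) y
      rw [List.cons_append] at ih
      rw [List.cons_append, List.cons_append, nonAscents_cons_cons, nonAscents_cons_cons]
      omega

theorem nonAscents_append_cons : ∀ (x : List α) (a : α) (y : List α),
    nonAscents (x ++ a :: y) = nonAscents (x ++ [a]) + nonAscents (a :: y)
  | [], _, _ => by simp [nonAscents]
  | [b], a, y => by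
      rw [List.singleton_append, List.singleton_append, nonAscents_cons_cons, nonAscents_pair]
  | b :: e :: t, a, y => by
      have ih := nonAscents_append_cons (e :: t) a y
      simp only [List.cons_append] at ih ⊢
      rw [nonAscents_cons_cons, nonAscents_cons_cons, ih]
      omega

theorem nonAscents_eq_zero_of_pairwise :
    ∀ {w : List α}, w.Pairwise (· < ·) → nonAscents w = 0
  | [], _ => rfl
  | [_], _ => rfl
  | a :: b :: t, h => by
      have hab : a < b := List.rel_of_pairwise_cons h (by simp)
      rw [nonAscents_cons_cons, if_neg (not_le.2 hab), nonAscents_eq_zero_of_pairwise h.of_cons]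

theorem nonAscents_add_nonAscents_reverse :
    ∀ {b : List α}, b.Nodup → nonAscents b + nonAscents b.reverse = b.length - 1
  | [], _ => rfl
  | [_], _ => rfl
  | a :: h :: t, hb => by
      have hah : a ≠ h := List.rel_of_pairwise_cons hb (by simp)
      have ih := nonAscents_add_nonAscents_reverse hb.of_cons
      have hrev : nonAscents (a :: h :: t).reverse
          = nonAscents (h :: t).reverse + nonAscents [h, a] := by
        rw [List.reverse_cons, List.reverse_cons, List.append_assoc, List.singleton_append,
          nonAscents_append_cons]
      rw [nonAscents_cons_cons, hrev, nonAscents_pair]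
      simp only [List.length_cons] at ih ⊢
      rcases lt_or_gt_of_ne hah with hlt | hgt
      · rw [if_neg (not_le.2 hlt), if_pos hlt.le]; omega
      · rw [if_pos hgt.le, if_neg (not_le.2 hgt)]; omega

theorem nonAscents_append_reverse {b : List α} (hb : b.Nodup) (hne : b ≠ []) :
    nonAscents (b ++ b.reverse) = b.length := by
  obtain ⟨x, m, rfl⟩ : ∃ x m, b = x ++ [m] :=
    ⟨b.dropLast, b.getLast hne, (List.dropLast_append_getLast hne).symm⟩
  have hsum := nonAscents_add_nonAscents_reverse hb
  have hmid : nonAscents (x ++ [m] ++ (x ++ [m]).reverse)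
      = nonAscents (x ++ [m]) + 1 + nonAscents (x ++ [m]).reverse := by
    rw [List.reverse_concat, List.append_assoc, List.singleton_append, nonAscents_append_cons,
      nonAscents_cons_cons, if_pos le_rfl, Nat.add_assoc]
  simp only [List.length_append, List.length_singleton] at hsum ⊢
  omega

end NonAscents

theorem nonAscents_le_of_sublist_rep {l : List ℕ} (hl : l.Pairwise (· < ·)) :
    ∀ {k : ℕ} {w : List ℕ}, w.Sublist (rep l k) → nonAscents w ≤ k - 1
  | 0, w, h => by
      obtain rfl : w = [] := List.sublist_nil.1 (by simpa [rep] using h)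
      rfl
  | k + 1, w, h => by
      rw [rep, List.replicate_succ, List.flatten_cons, List.sublist_append_iff] at h
      obtain ⟨w₁, w₂, rfl, h₁, h₂⟩ := h
      have hw₁ := nonAscents_eq_zero_of_pairwise (hl.sublist h₁)
      cases k with
      | zero =>
          obtain rfl : w₂ = [] := List.sublist_nil.1 (by simpa [rep] using h₂)
          rw [List.append_nil, hw₁]
      | succ k =>
          have := nonAscents_le_of_sublist_rep hl h₂
          have := nonAscents_append_le w₁ w₂
          omega

theorem sublist_rep_length {l : List ℕ} :
    ∀ {w : List ℕ}, (∀ a ∈ w, a ∈ l) → w.Sublist (rep l w.length)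
  | [], _ => by simp [rep]
  | a :: t, h => by
      rw [rep, List.length_cons, List.replicate_succ, List.flatten_cons, ← List.singleton_append]
      exact (List.singleton_sublist.2 (h a (by simp))).append
        (sublist_rep_length fun b hb => h b (List.mem_cons_of_mem _ hb))

theorem Ic_pairwise_lt (c : ℕ) : (Ic c).Pairwise (· < ·) := by
  simpa [Ic] using List.pairwise_lt_range' (s := 1) (n := c)

theorem contains_upSeq_succ_Ic_append_Dc (c : ℕ) :
    Contains (upSeq c (c + 1)) (Ic c ++ Dc c) := by
  refine ⟨id, Function.injective_id, ?_⟩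
  have hD : (Dc c).Sublist (rep (Ic c) c) := by
    simpa [Dc, Ic] using sublist_rep_length (l := Ic c) (w := Dc c) (by simp [Dc])
  rw [List.map_id, upSeq, rep, List.replicate_succ, List.flatten_cons]
  exact (List.Sublist.refl _).append hD

theorem succ_le_of_contains_upSeq_Ic_append_Dc {c k : ℕ} (hc : 1 ≤ c)
    (h : Contains (upSeq c k) (Ic c ++ Dc c)) : c + 1 ≤ k := by
  obtain ⟨f, hf, hsub⟩ := h
  have hmap : (Ic c ++ Dc c).map f = (Ic c).map f ++ ((Ic c).map f).reverse := by
    simp [Dc]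
  have hb : ((Ic c).map f).Nodup := (Ic_pairwise_lt c).nodup.map hf
  have hlen : ((Ic c).map f).length = c := by simp [Ic]
  have hcount := nonAscents_append_reverse hb (List.ne_nil_of_length_pos (by omega))
  have hbound := nonAscents_le_of_sublist_rep (Ic_pairwise_lt c) (hmap ▸ hsub)
  rw [hlen] at hcount
  omega

theorem stmt11 (c : ℕ) (hc : 1 ≤ c) : lval c (Ic c ++ Dc c) = c + 1 :=
  le_antisymm (Nat.sInf_le (contains_upSeq_succ_Ic_append_Dc c))
    (le_csInf ⟨_, contains_upSeq_succ_Ic_append_Dc c⟩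
      fun _ hk => succ_le_of_contains_upSeq_Ic_append_Dc hc hk)
end

section
/- For every x ≥ 1 and c ≥ 2, the minimum k such that alt(c,k) contains I_c^x is 2x - 1; moreover alt(c, 2x-1) has I_π^x as a subsequence for a permutation π of {1,...,c} only if π(c) = c. -/
/-!
Project everything onto two letters `a < b`. The projection of `alt(c,k)` is the word of `k`
blocks `ab ba ab …`, which has `k + 1` maximal runs of equal letters, the first one consisting of
`a`; the projection of `I_π^x` is `(ab)^x` or `(ba)^x`, an alternating word of length `2x`, and an
alternating subsequence uses at most one letter of each run (`List.destutter` counts the runs).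
Hence `2x ≤ k + 1`, and even `2x ≤ k` when `b` precedes `a` in `I_π`, since then the first run
is useless. With `a = 1`, `b = c` this gives `k ≥ 2x - 1`, attained by `π = id`; if `π(c) ≠ c`,
then `b = c` precedes `a = π(c)` in `I_π`, which forces `k ≥ 2x`.
-/

open List

def zigzag (a b k : ℕ) : List ℕ :=
  ((range k).map fun i => if Even i then [a, b] else [b, a]).flatten

lemma zigzag_zero (a b : ℕ) : zigzag a b 0 = [] := rfl

lemma zigzag_succ (a b k : ℕ) : zigzag a b (k + 1) = a :: b :: zigzag b a k := by
  simp [zigzag, range_succ_eq_map, Function.comp_def, Nat.even_add_one, ite_not,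
    -Nat.not_even_iff_odd]

lemma altSeq_add_two (c k : ℕ) : altSeq c (k + 2) = Ic c ++ (Dc c ++ altSeq c k) := by
  simp [altSeq, range_succ_eq_map, Function.comp_def, add_assoc, Nat.add_mod_right]

lemma rep_succ (l : List ℕ) (x : ℕ) : rep l (x + 1) = l ++ rep l x := by
  simp [rep, replicate_succ]

lemma length_rep (l : List ℕ) (x : ℕ) : (rep l x).length = x * l.length := by
  simp [rep]

lemma filter_rep (p : ℕ → Bool) (l : List ℕ) (x : ℕ) : (rep l x).filter p = rep (l.filter p) x := by
  simp [rep, filter_flatten, map_replicate]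

lemma length_destutter_cons_zigzag {a b : ℕ} (hab : a ≠ b) (k : ℕ) :
    ((a :: zigzag a b k).destutter (· ≠ ·)).length = k + 1 := by
  induction k generalizing a b with
  | zero => simp [zigzag_zero]
  | succ k ih =>
    rw [zigzag_succ, destutter_cons_cons, if_neg (not_not.2 rfl), ← destutter_cons',
      destutter_cons_cons, if_pos hab, length_cons, ← destutter_cons', ih hab.symm]

lemma List.IsChain.length_le_of_sublist_zigzag {u : List ℕ} {a b k : ℕ} (hab : a ≠ b)
    (hu : u.IsChain (· ≠ ·)) (h : u <+ zigzag a b k) : u.length ≤ k + 1 :=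
  length_destutter_cons_zigzag hab k ▸ hu.length_le_length_destutter_ne (h.cons a)

lemma List.IsChain.length_le_of_cons_sublist_zigzag {w : List ℕ} {a b k : ℕ} (hab : a ≠ b)
    (hw : (b :: w).IsChain (· ≠ ·)) (h : b :: w <+ zigzag a b k) : (b :: w).length ≤ k := by
  cases k with
  | zero => simp [zigzag_zero] at h
  | succ k =>
    rw [zigzag_succ, sublist_cons_iff] at h
    obtain h | ⟨r, hr, -⟩ := h
    · exact length_destutter_cons_zigzag hab.symm k ▸ hw.length_le_length_destutter_ne h
    · exact absurd (cons_eq_cons.1 hr).1 hab.symm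

lemma isChain_ne_rep_pair {a b : ℕ} (hab : a ≠ b) (x : ℕ) : (rep [a, b] x).IsChain (· ≠ ·) := by
  induction x with
  | zero => exact .nil
  | succ x ih =>
    rw [rep_succ, cons_append, cons_append, nil_append, isChain_cons_cons]
    refine ⟨hab, ?_⟩
    cases x with
    | zero => exact .singleton b
    | succ x =>
      rw [rep_succ] at ih ⊢
      exact isChain_cons_cons.2 ⟨hab.symm, ih⟩

lemma filter_mem_pair_of_nodup {α : Type*} [DecidableEq α] {l : List α} {a b : α} (hab : a ≠ b)
    (hl : l.Nodup) (ha : a ∈ l) (hb : b ∈ l) :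
    l.filter (· ∈ [a, b]) = [a, b] ∨ l.filter (· ∈ [a, b]) = [b, a] := by
  refine perm_pair.1 ((perm_ext_iff_of_nodup (hl.filter _) (by simp [hab])).2 fun v => ?_)
  rw [mem_filter, decide_eq_true_eq, and_iff_right_iff_imp]
  intro hv
  obtain rfl | rfl : v = a ∨ v = b := by simpa using hv
  exacts [ha, hb]

lemma filter_Ic {a b c : ℕ} (ha : 1 ≤ a) (hab : a < b) (hbc : b ≤ c) :
    (Ic c).filter (· ∈ [a, b]) = [a, b] := by
  rw [Ic]
  have hlt : ((range' 1 c).filter (· ∈ [a, b])).Pairwise (· < ·) :=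
    Pairwise.sublist filter_sublist pairwise_lt_range'
  refine (filter_mem_pair_of_nodup hab.ne nodup_range' ?_ ?_).resolve_right
    fun h => ?_
  · rw [mem_range'_1]; omega
  · rw [mem_range'_1]; omega
  · rw [h, pairwise_pair] at hlt
    omega

lemma filter_Dc {a b c : ℕ} (ha : 1 ≤ a) (hab : a < b) (hbc : b ≤ c) :
    (Dc c).filter (· ∈ [a, b]) = [b, a] := by
  rw [Dc, filter_reverse, filter_Ic ha hab hbc]
  rfl

lemma filter_altSeq {a b c : ℕ} (ha : 1 ≤ a) (hab : a < b) (hbc : b ≤ c) (k : ℕ) :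
    (altSeq c k).filter (· ∈ [a, b]) = zigzag a b k := by
  simp only [altSeq, zigzag, filter_flatten, map_map, Nat.even_iff]
  congr 2
  funext i
  by_cases hi : i % 2 = 0
  · rw [Function.comp_apply, if_pos hi, if_pos hi, filter_Ic ha hab hbc]
  · rw [Function.comp_apply, if_neg hi, if_neg hi, filter_Dc ha hab hbc]

lemma two_mul_le_succ_of_rep_sublist_altSeq {a b c k x : ℕ} {p : List ℕ} (ha : 1 ≤ a)
    (hab : a < b) (hbc : b ≤ c) (hp : p.filter (· ∈ [a, b]) = [a, b])
    (h : rep p x <+ altSeq c k) : 2 * x ≤ k + 1 := by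
  have h' := h.filter (· ∈ [a, b])
  rw [filter_rep, hp, filter_altSeq ha hab hbc] at h'
  have := (isChain_ne_rep_pair hab.ne x).length_le_of_sublist_zigzag hab.ne h'
  simpa [length_rep, mul_comm] using this

lemma two_mul_le_of_rep_sublist_altSeq {a b c k x : ℕ} {p : List ℕ} (ha : 1 ≤ a)
    (hab : a < b) (hbc : b ≤ c) (hp : p.filter (· ∈ [a, b]) = [b, a])
    (h : rep p x <+ altSeq c k) : 2 * x ≤ k := by
  have h' := h.filter (· ∈ [a, b])
  rw [filter_rep, hp, filter_altSeq ha hab hbc] at h'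
  cases x with
  | zero => exact Nat.zero_le k
  | succ x =>
    have hchain := isChain_ne_rep_pair hab.ne.symm (x + 1)
    rw [rep_succ, cons_append] at h' hchain
    have := hchain.length_le_of_cons_sublist_zigzag hab.ne h'
    simp only [length_cons, length_append, length_rep, length_nil] at this
    omega

lemma nodup_Iperm {c : ℕ} (π : Equiv.Perm (Fin c)) : (Iperm π).Nodup :=
  nodup_ofFn.2 fun _ _ hij => π.injective (Fin.ext (Nat.succ_injective hij))

lemma mem_Iperm {c v : ℕ} (π : Equiv.Perm (Fin c)) (h1 : 1 ≤ v) (h2 : v ≤ c) : v ∈ Iperm π := by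
  rw [Iperm, mem_ofFn]
  exact ⟨π.symm ⟨v - 1, by omega⟩, by rw [Equiv.apply_symm_apply]; exact Nat.sub_add_cancel h1⟩

lemma Iperm_one (c : ℕ) : Iperm (1 : Equiv.Perm (Fin c)) = Ic c :=
  ext_getElem (by simp [Iperm, Ic]) fun i _ _ => by simp [Iperm, Ic, add_comm]

lemma Iperm_eq_append {n : ℕ} (π : Equiv.Perm (Fin (n + 1))) :
    Iperm π = (ofFn fun i : Fin n => (π i.castSucc).val + 1) ++ [(π (Fin.last n)).val + 1] := by
  rw [Iperm, ofFn_succ', concat_eq_append]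

lemma two_mul_le_succ_of_rep_Iperm_sublist_altSeq {c k x : ℕ} (hc : 2 ≤ c)
    (π : Equiv.Perm (Fin c)) (h : rep (Iperm π) x <+ altSeq c k) : 2 * x ≤ k + 1 := by
  rcases filter_mem_pair_of_nodup (by omega : 1 ≠ c) (nodup_Iperm π) (mem_Iperm π le_rfl (by omega))
    (mem_Iperm π (by omega) le_rfl) with hp | hp
  · exact two_mul_le_succ_of_rep_sublist_altSeq le_rfl (by omega) le_rfl hp h
  · exact (two_mul_le_of_rep_sublist_altSeq le_rfl (by omega) le_rfl hp h).trans k.le_succ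

lemma two_mul_le_of_rep_Iperm_sublist_altSeq {n k x : ℕ} (π : Equiv.Perm (Fin (n + 1)))
    (hπ : π (Fin.last n) ≠ Fin.last n) (h : rep (Iperm π) x <+ altSeq (n + 1) k) : 2 * x ≤ k := by
  set v := (π (Fin.last n)).val + 1 with hv
  have hvn : v ≤ n := Fin.val_lt_last hπ
  refine two_mul_le_of_rep_sublist_altSeq (a := v) (b := n + 1) (by omega) (by omega) le_rfl ?_ h
  refine (filter_mem_pair_of_nodup (by omega) (nodup_Iperm π) (mem_Iperm π (by omega) (by omega))
    (mem_Iperm π (by omega) le_rfl)).resolve_left fun hp => ?_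
  rw [Iperm_eq_append, ← hv, filter_append, filter_singleton] at hp
  simp only [mem_cons_self, decide_true, cond_true] at hp
  have hlast : v = n + 1 := by simpa using congrArg getLast? hp
  omega

lemma rep_Ic_sublist_altSeq (c x : ℕ) : rep (Ic c) (x + 1) <+ altSeq c (2 * x + 1) := by
  induction x with
  | zero => simp [rep, altSeq]
  | succ x ih =>
    rw [rep_succ, show 2 * (x + 1) + 1 = 2 * x + 1 + 2 by ring, altSeq_add_two]
    exact (ih.trans (sublist_append_right _ _)).append_left _

theorem stmt15 (c x : ℕ) (hc : 2 ≤ c) (hx : 1 ≤ x) :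
    sInf {k | ∃ π : Equiv.Perm (Fin c), (rep (Iperm π) x).Sublist (altSeq c k)} = 2 * x - 1 ∧
    ∀ π : Equiv.Perm (Fin c), (rep (Iperm π) x).Sublist (altSeq c (2 * x - 1)) →
      π ⟨c - 1, by omega⟩ = ⟨c - 1, by omega⟩ := by
  obtain ⟨n, rfl⟩ : ∃ n, c = n + 1 := ⟨c - 1, by omega⟩
  obtain ⟨y, rfl⟩ : ∃ y, x = y + 1 := ⟨x - 1, by omega⟩
  have hk : 2 * (y + 1) - 1 = 2 * y + 1 := by omega
  refine ⟨IsLeast.csInf_eq ⟨⟨1, ?_⟩, ?_⟩, fun π hπ => ?_⟩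
  · rw [hk, Iperm_one]
    exact rep_Ic_sublist_altSeq _ _
  · rintro k ⟨π, hπ⟩
    have := two_mul_le_succ_of_rep_Iperm_sublist_altSeq hc π hπ
    omega
  · by_contra hne
    have := two_mul_le_of_rep_Iperm_sublist_altSeq π (by simpa [Fin.ext_iff, Fin.last] using hne)
      (hk ▸ hπ)
    omega
end
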